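/- Let Z be an n-dimensional p-filiform Zinbiel algebra. Then there exists a basis e_1,...,e_n of Z such that [e_1, e_i] = e_{i+1} for all p+1 ≤ i ≤ n−p−1. -/

import Mathlib

/-- Lower central series: `lcs b 0 = Z = Z¹`, `lcs b k = Z^{k+1} = [Z, Z^k]`. -/
def lcs {F : Type*} [Field F] {Z : Type*} [AddCommGroup Z] [Module F Z]
    (b : Z →ₗ[F] Z →ₗ[F] Z) : ℕ → Submodule F Z
  | 0 => ⊤
  | k + 1 => Submodule.span F {w | ∃ x : Z, ∃ y ∈ lcs b k, w = b x y}

namespace ZinbielAux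

variable {F : Type*} [Field F] {Z : Type*} [AddCommGroup Z] [Module F Z]

section basic

variable (b : Z →ₗ[F] Z →ₗ[F] Z)

lemma lcs_succ (k : ℕ) :
    lcs b (k+1) = Submodule.span F {w | ∃ x : Z, ∃ y ∈ lcs b k, w = b x y} := rfl

lemma mem_lcs_succ (x : Z) {y : Z} {k : ℕ} (hy : y ∈ lcs b k) : b x y ∈ lcs b (k+1) :=
  Submodule.subset_span ⟨x, y, hy, rfl⟩

lemma lcs_succ_le : ∀ k, lcs b (k+1) ≤ lcs b k := by
  intro k
  induction k with
  | zero => exact le_top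
  | succ k ih =>
    rw [lcs_succ b (k+1)]
    refine Submodule.span_le.2 ?_
    rintro w ⟨x, y, hy, rfl⟩
    exact mem_lcs_succ b x (ih hy)

lemma lcs_le_lcs {i j : ℕ} (h : i ≤ j) : lcs b j ≤ lcs b i := by
  induction j with
  | zero => simp_all
  | succ j ih =>
    rcases Nat.lt_or_ge i (j+1) with h' | h'
    · exact le_trans (lcs_succ_le b j) (ih (by omega))
    · have : i = j + 1 := by omega
      subst this; exact le_rfl

variable (hZ : ∀ x y z : Z, b (b x y) z = b x (b y z) + b x (b z y))
include hZ

lemma lcs_right : ∀ (k : ℕ) (y : Z), y ∈ lcs b k → ∀ u : Z, b y u ∈ lcs b (k+1) := by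
  intro k
  induction k with
  | zero => exact fun y _ u => Submodule.subset_span ⟨y, u, trivial, rfl⟩
  | succ k ih =>
    intro y hy
    induction hy using Submodule.span_induction with
    | mem w hw =>
      obtain ⟨a, v, hv, rfl⟩ := hw
      intro u
      rw [hZ a v u]
      exact Submodule.add_mem _ (mem_lcs_succ b a (ih v hv u))
        (mem_lcs_succ b a (mem_lcs_succ b u hv))
    | zero => intro u; simp
    | add w₁ w₂ _ _ h1 h2 =>
      intro u
      have : b (w₁ + w₂) u = b w₁ u + b w₂ u := by simp
      rw [this]; exact Submodule.add_mem _ (h1 u) (h2 u)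
    | smul c w _ h =>
      intro u
      have : b (c • w) u = c • b w u := by simp
      rw [this]; exact Submodule.smul_mem _ _ (h u)

/-- products of powers: `C_i ∘ C_j ⊆ C_{i+j+1}` -/
lemma lcs_mul : ∀ (s i j : ℕ), i + j ≤ s → ∀ y ∈ lcs b i, ∀ v ∈ lcs b j,
    b y v ∈ lcs b (i+j+1) := by
  intro s
  induction s with
  | zero =>
    intro i j hij y hy v hv
    have hi : i = 0 := by omega
    have hj : j = 0 := by omega
    subst hi; subst hj
    simpa using mem_lcs_succ b y hv
  | succ s ih =>
    intro i j hij y hy v hv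
    rcases Nat.eq_zero_or_pos i with hi | hi
    · subst hi
      simpa using mem_lcs_succ b y hv
    · obtain ⟨i', rfl⟩ : ∃ i', i = i' + 1 := ⟨i - 1, by omega⟩
      clear hi
      induction hy using Submodule.span_induction with
      | mem w hw =>
        obtain ⟨a, c, hc, rfl⟩ := hw
        rw [hZ a c v]
        have h1 : b c v ∈ lcs b (i' + j + 1) := ih i' j (by omega) c hc v hv
        have h2 : b v c ∈ lcs b (j + i' + 1) := ih j i' (by omega) v hv c hc
        have h2' : b v c ∈ lcs b (i' + j + 1) := by rwa [Nat.add_comm j i'] at h2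
        have e1 : b a (b c v) ∈ lcs b (i' + j + 2) := mem_lcs_succ b a h1
        have e2 : b a (b v c) ∈ lcs b (i' + j + 2) := mem_lcs_succ b a h2'
        have : i' + 1 + j + 1 = i' + j + 2 := by omega
        rw [this]
        exact Submodule.add_mem _ e1 e2
      | zero => simp
      | add w₁ w₂ _ _ h1 h2 =>
        have : b (w₁ + w₂) v = b w₁ v + b w₂ v := by simp
        rw [this]; exact Submodule.add_mem _ h1 h2
      | smul c w _ h =>
        have : b (c • w) v = c • b w v := by simp
        rw [this]; exact Submodule.smul_mem _ _ h

end basic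

end ZinbielAux

namespace ZinbielAux2
open ZinbielAux

variable {F : Type*} [Field F] {Z : Type*} [AddCommGroup Z] [Module F Z]
variable (b : Z →ₗ[F] Z →ₗ[F] Z)

/-- the "kernel" submodule `K_k = {x | b x C_k ⊆ C_{k+2}}` -/
def Kmod (k : ℕ) : Submodule F Z where
  carrier := {x | ∀ y ∈ lcs b k, b x y ∈ lcs b (k+2)}
  add_mem' := by
    intro a c ha hc y hy
    have : b (a + c) y = b a y + b c y := by simp
    rw [this]; exact Submodule.add_mem _ (ha y hy) (hc y hy)
  zero_mem' := by intro y hy; simp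
  smul_mem' := by
    intro t a ha y hy
    have : b (t • a) y = t • b a y := by simp
    rw [this]; exact Submodule.smul_mem _ _ (ha y hy)

lemma mem_Kmod {k : ℕ} {x : Z} : x ∈ Kmod b k ↔ ∀ y ∈ lcs b k, b x y ∈ lcs b (k+2) :=
  Iff.rfl

/-- cancellation: if `y ∉ M` and `c • y ∈ M` then `c = 0`. -/
lemma smul_cancel {M : Submodule F Z} {y : Z} (hy : y ∉ M) {c : F}
    (h : c • y ∈ M) : c = 0 := by
  by_contra hc
  exact hy (by simpa [smul_smul, inv_mul_cancel₀ hc] using M.smul_mem c⁻¹ h)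

/-- coefficient transitivity: `u ≡ c•w`, `w ≡ d•t` (mod M) gives `u ≡ (c*d)•t`. -/
lemma coeff_trans {M : Submodule F Z} {u w t : Z} {c d : F}
    (h1 : u - c • w ∈ M) (h2 : w - d • t ∈ M) : u - (c * d) • t ∈ M := by
  have : u - (c * d) • t = (u - c • w) + c • (w - d • t) := by
    rw [smul_sub, smul_smul]; abel
  rw [this]
  exact M.add_mem h1 (M.smul_mem _ h2)

/-- two proper subspaces cannot cover the space -/
lemma avoid_two (K₁ K₂ : Submodule F Z) (h1 : K₁ ≠ ⊤) (h2 : K₂ ≠ ⊤) :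
    ∃ x : Z, x ∉ K₁ ∧ x ∉ K₂ := by
  obtain ⟨a, ha⟩ : ∃ a, a ∉ K₁ := by
    by_contra h; push_neg at h
    exact h1 (Submodule.eq_top_iff'.2 h)
  obtain ⟨c, hc⟩ : ∃ c, c ∉ K₂ := by
    by_contra h; push_neg at h
    exact h2 (Submodule.eq_top_iff'.2 h)
  by_cases hak : a ∈ K₂
  · by_cases hck : c ∈ K₁
    · refine ⟨a + c, fun h => ?_, fun h => ?_⟩
      · exact ha (by simpa using K₁.sub_mem h hck)
      · exact hc (by simpa using K₂.sub_mem h hak)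
    · exact ⟨c, hck, hc⟩
  · exact ⟨a, ha, hak⟩

/-- linear independence of a family adapted to the (strictly decreasing) filtration -/
lemma flag_indep : ∀ (r : ℕ) (w : Fin r → Z) (ℓ : Fin r → ℕ),
    (∀ i j : Fin r, i < j → ℓ i < ℓ j) →
    (∀ i, w i ∈ lcs b (ℓ i)) → (∀ i, w i ∉ lcs b (ℓ i + 1)) →
    LinearIndependent F w := by
  intro r
  induction r with
  | zero => intro w ℓ _ _ _; exact linearIndependent_empty_type
  | succ r ih =>
    intro w ℓ hmono hmem hnmem
    rw [← Fin.cons_self_tail w]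
    rw [linearIndependent_fin_cons]
    constructor
    · refine ih (Fin.tail w) (Fin.tail ℓ) ?_ ?_ ?_
      · intro i j hij
        exact hmono i.succ j.succ (by simpa using hij)
      · intro i; exact hmem i.succ
      · intro i; exact hnmem i.succ
    · intro hmem0
      refine hnmem 0 ?_
      have hsub : Submodule.span F (Set.range (Fin.tail w)) ≤ lcs b (ℓ 0 + 1) := by
        refine Submodule.span_le.2 ?_
        rintro _ ⟨i, rfl⟩
        have h1 : ℓ 0 < ℓ i.succ := hmono 0 i.succ (Fin.succ_pos i)
        exact lcs_le_lcs b (by omega) (hmem i.succ)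
      exact hsub hmem0

end ZinbielAux2

namespace ZinbielCore
open ZinbielAux ZinbielAux2

variable {F : Type*} [Field F] {Z : Type*} [AddCommGroup Z] [Module F Z]
variable (b : Z →ₗ[F] Z →ₗ[F] Z)

/-- flip directions for "linear" scalar functions -/
lemma func_flip {f g : Z → F}
    (hf1 : ∀ u v, f (u + v) = f u + f v) (hf2 : ∀ (c : F) (v : Z), f (c • v) = c * f v)
    (hg1 : ∀ u v, g (u + v) = g u + g v) (hg2 : ∀ (c : F) (v : Z), g (c • v) = c * g v)
    (hfnz : ∃ a, f a ≠ 0) {x₀ : Z} (h0 : f x₀ = 0) (h1 : g x₀ ≠ 0) :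
    ∃ y, f y ≠ 0 ∧ g y = 0 := by
  obtain ⟨a, ha⟩ := hfnz
  by_cases hga : g a = 0
  · exact ⟨a, ha, hga⟩
  · refine ⟨x₀ + (-(g x₀ / g a)) • a, ?_, ?_⟩
    · rw [hf1, hf2, h0]
      simp only [zero_add]
      intro hcon
      rcases mul_eq_zero.1 hcon with h | h
      · simp only [neg_eq_zero, div_eq_zero_iff] at h
        tauto
      · exact ha h
    · rw [hg1, hg2]
      field_simp
      ring
  
/-- proportionality for "linear" scalar functions with nested kernels -/
lemma func_prop {f g : Z → F}
    (hf1 : ∀ u v, f (u + v) = f u + f v) (hf2 : ∀ (c : F) (v : Z), f (c • v) = c * f v)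
    (hg1 : ∀ u v, g (u + v) = g u + g v) (hg2 : ∀ (c : F) (v : Z), g (c • v) = c * g v)
    (hfnz : ∃ a, f a ≠ 0) (hker : ∀ v, f v = 0 → g v = 0) :
    ∃ c : F, ∀ v, g v = c * f v := by
  obtain ⟨a, ha⟩ := hfnz
  refine ⟨g a / f a, fun v => ?_⟩
  have hv : f (v + (-(f v / f a)) • a) = 0 := by
    rw [hf1, hf2]; field_simp; ring
  have hgv : g (v + (-(f v / f a)) • a) = 0 := hker _ hv
  rw [hg1, hg2] at hgv
  rw [div_mul_eq_mul_div, eq_div_iff ha]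
  have h2 : g v * f a - f v * g a = 0 := by
    field_simp at hgv
    linear_combination hgv
  linear_combination h2

variable (hZ : ∀ x y z : Z, b (b x y) z = b x (b y z) + b x (b z y))
include hZ

/-- THE CORE LEMMA: adjacent kernels agree in the stable range. -/
lemma core (k : ℕ) (hk1 : 1 ≤ k)
    (hprop : ∀ m, 1 ≤ m → m ≤ k+3 → ∃ y, y ∈ lcs b m ∧ y ∉ lcs b (m+1))
    (hone : ∀ m, 1 ≤ m → m ≤ k+3 → ∀ y, y ∈ lcs b m → y ∉ lcs b (m+1) →
      ∀ y' ∈ lcs b m, ∃ c : F, y' - c • y ∈ lcs b (m+1)) :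
    Kmod b k = Kmod b (k+1) := by
  by_contra hne
  -- generators
  have hgenex : ∀ m : ℕ, ∃ y : Z, (1 ≤ m → m ≤ k+3 → y ∈ lcs b m ∧ y ∉ lcs b (m+1)) := by
    intro m
    by_cases h : 1 ≤ m ∧ m ≤ k+3
    · obtain ⟨y, h1, h2⟩ := hprop m h.1 h.2
      exact ⟨y, fun _ _ => ⟨h1, h2⟩⟩
    · exact ⟨0, fun h1 h2 => absurd ⟨h1, h2⟩ h⟩
  choose gen hgen using hgenex
  have hgm : ∀ m, 1 ≤ m → m ≤ k+3 → gen m ∈ lcs b m := fun m h1 h2 => (hgen m h1 h2).1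
  have hgn : ∀ m, 1 ≤ m → m ≤ k+3 → gen m ∉ lcs b (m+1) := fun m h1 h2 => (hgen m h1 h2).2
  -- key equating helper
  have keyeq : ∀ (m : ℕ), 1 ≤ m → m ≤ k+3 → ∀ (a : Z) (c c' : F),
      a - c • gen m ∈ lcs b (m+1) → a - c' • gen m ∈ lcs b (m+1) → c = c' := by
    intro m h1 h2 a c c' hA hB
    have hmem : (c - c') • gen m ∈ lcs b (m+1) := by
      have := Submodule.sub_mem _ hB hA
      have he : (a - c' • gen m) - (a - c • gen m) = (c - c') • gen m := by
        rw [sub_smul]; abel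
      rwa [he] at this
    have := smul_cancel (hgn m h1 h2) hmem
    exact sub_eq_zero.1 this
  -- scalar families
  have hFex : ∀ (m : ℕ) (v : Z), ∃ c : F, (1 ≤ m → m + 1 ≤ k+3 →
      b v (gen m) - c • gen (m+1) ∈ lcs b (m+2)) := by
    intro m v
    by_cases h : 1 ≤ m ∧ m + 1 ≤ k+3
    · have hmem : b v (gen m) ∈ lcs b (m+1) := mem_lcs_succ b v (hgm m h.1 (by omega))
      obtain ⟨c, hc⟩ := hone (m+1) (by omega) h.2 (gen (m+1))
        (hgm (m+1) (by omega) h.2) (hgn (m+1) (by omega) h.2) _ hmem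
      exact ⟨c, fun _ _ => hc⟩
    · exact ⟨0, fun h1 h2 => absurd ⟨h1, h2⟩ h⟩
  choose Ff hFf using hFex
  have hGex : ∀ (m : ℕ) (v : Z), ∃ c : F, (1 ≤ m → m + 1 ≤ k+3 →
      b (gen m) v - c • gen (m+1) ∈ lcs b (m+2)) := by
    intro m v
    by_cases h : 1 ≤ m ∧ m + 1 ≤ k+3
    · have hmem : b (gen m) v ∈ lcs b (m+1) := lcs_right b hZ m _ (hgm m h.1 (by omega)) v
      obtain ⟨c, hc⟩ := hone (m+1) (by omega) h.2 (gen (m+1))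
        (hgm (m+1) (by omega) h.2) (hgn (m+1) (by omega) h.2) _ hmem
      exact ⟨c, fun _ _ => hc⟩
    · exact ⟨0, fun h1 h2 => absurd ⟨h1, h2⟩ h⟩
  choose Gf hGf using hGex
  have hβex : ∀ (u v : Z), ∃ c : F, b u v - c • gen 1 ∈ lcs b 2 := by
    intro u v
    have hmem : b u v ∈ lcs b 1 := mem_lcs_succ b u (by trivial)
    exact hone 1 (by omega) (by omega) (gen 1) (hgm 1 (by omega) (by omega))
      (hgn 1 (by omega) (by omega)) _ hmem
  choose β hβ using hβex
  have hΓex : ∀ (m : ℕ), ∃ c : F, (1 ≤ m → m + 2 ≤ k+3 →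
      b (gen 1) (gen m) - c • gen (m+2) ∈ lcs b (m+3)) := by
    intro m
    by_cases h : 1 ≤ m ∧ m + 2 ≤ k+3
    · have hmem : b (gen 1) (gen m) ∈ lcs b (m+2) := by
        have := lcs_mul b hZ (1+m) 1 m le_rfl (gen 1) (hgm 1 (by omega) (by omega))
          (gen m) (hgm m h.1 (by omega))
        have he : 1 + m + 1 = m + 2 := by omega
        rwa [he] at this
      obtain ⟨c, hc⟩ := hone (m+2) (by omega) h.2 (gen (m+2))
        (hgm (m+2) (by omega) h.2) (hgn (m+2) (by omega) h.2) _ hmem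
      exact ⟨c, fun _ _ => hc⟩
    · exact ⟨0, fun h1 h2 => absurd ⟨h1, h2⟩ h⟩
  choose Γ hΓ using hΓex
  have hΓ'ex : ∀ (m : ℕ), ∃ c : F, (1 ≤ m → m + 2 ≤ k+3 →
      b (gen m) (gen 1) - c • gen (m+2) ∈ lcs b (m+3)) := by
    intro m
    by_cases h : 1 ≤ m ∧ m + 2 ≤ k+3
    · have hmem : b (gen m) (gen 1) ∈ lcs b (m+2) := by
        have := lcs_mul b hZ (m+1) m 1 le_rfl (gen m) (hgm m h.1 (by omega))
          (gen 1) (hgm 1 (by omega) (by omega))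
        rwa [show m + 1 + 1 = m + 2 by omega] at this
      obtain ⟨c, hc⟩ := hone (m+2) (by omega) h.2 (gen (m+2))
        (hgm (m+2) (by omega) h.2) (hgn (m+2) (by omega) h.2) _ hmem
      exact ⟨c, fun _ _ => hc⟩
    · exact ⟨0, fun h1 h2 => absurd ⟨h1, h2⟩ h⟩
  choose Γ' hΓ' using hΓ'ex
  -- congruence movers
  have moveL : ∀ (m : ℕ) (x a : Z) (cf : F) (t : Z), a - cf • t ∈ lcs b m →
      b x a - cf • b x t ∈ lcs b (m+1) := by
    intro m x a cf t h
    have := mem_lcs_succ b x h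
    have he : b x (a - cf • t) = b x a - cf • b x t := by simp
    rwa [he] at this
  have moveR : ∀ (m : ℕ) (a : Z) (cf : F) (t : Z), a - cf • t ∈ lcs b m →
      ∀ v, b a v - cf • b t v ∈ lcs b (m+1) := by
    intro m a cf t h v
    have := lcs_right b hZ m _ h v
    have he : b (a - cf • t) v = b a v - cf • b t v := by simp
    rwa [he] at this
  have moveMulR : ∀ (i j : ℕ) (a : Z) (cf : F) (t : Z), a - cf • t ∈ lcs b i →
      ∀ v ∈ lcs b j, b a v - cf • b t v ∈ lcs b (i+j+1) := by
    intro i j a cf t h v hv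
    have := lcs_mul b hZ (i+j) i j le_rfl _ h v hv
    have he : b (a - cf • t) v = b a v - cf • b t v := by simp
    rwa [he] at this
  have moveMulL : ∀ (i j : ℕ) (y : Z) (hy : y ∈ lcs b i) (a : Z) (cf : F) (t : Z),
      a - cf • t ∈ lcs b j → b y a - cf • b y t ∈ lcs b (i+j+1) := by
    intro i j y hy a cf t h
    have := lcs_mul b hZ (i+j) i j le_rfl y hy _ h
    have he : b y (a - cf • t) = b y a - cf • b y t := by simp
    rwa [he] at this
  -- Identity I  :  β(x,u)·G₁(v) = (β(u,v)+β(v,u))·F₁(x)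
  have id1 : ∀ x u v : Z, β x u * Gf 1 v = (β u v + β v u) * Ff 1 x := by
    intro x u v
    have hL : b (b x u) v - (β x u * Gf 1 v) • gen 2 ∈ lcs b 3 := by
      have h1 := moveR 2 _ _ _ (hβ x u) v
      exact coeff_trans h1 (hGf 1 v (by omega) (by omega))
    have hR : b (b x u) v - ((β u v + β v u) * Ff 1 x) • gen 2 ∈ lcs b 3 := by
      have h3 : b x (b u v) - (β u v * Ff 1 x) • gen 2 ∈ lcs b 3 :=
        coeff_trans (moveL 2 x _ _ _ (hβ u v)) (hFf 1 x (by omega) (by omega))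
      have h4 : b x (b v u) - (β v u * Ff 1 x) • gen 2 ∈ lcs b 3 :=
        coeff_trans (moveL 2 x _ _ _ (hβ v u)) (hFf 1 x (by omega) (by omega))
      have hsum := Submodule.add_mem _ h3 h4
      rw [sub_add_sub_comm] at hsum
      rw [hZ x u v]
      rwa [show ((β u v + β v u) * Ff 1 x) • gen 2
          = (β u v * Ff 1 x) • gen 2 + (β v u * Ff 1 x) • gen 2 from by
        rw [← add_smul, ← add_mul]]
    exact keyeq 2 (by omega) (by omega) _ _ _ hL hR
  -- Identity II_m :  β(x,v)·Γ_m = (F_m(v)+G_m(v))·F_{m+1}(x)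
  have id2 : ∀ m : ℕ, 1 ≤ m → m + 2 ≤ k+3 → ∀ x v : Z,
      β x v * Γ m = (Ff m v + Gf m v) * Ff (m+1) x := by
    intro m h1 h2 x v
    have hL : b (b x v) (gen m) - (β x v * Γ m) • gen (m+2) ∈ lcs b (m+3) := by
      have ha := moveMulR 2 m _ _ _ (hβ x v) (gen m) (hgm m h1 (by omega))
      rw [show 2+m+1 = m+3 by omega] at ha
      exact coeff_trans ha (hΓ m h1 h2)
    have hR : b (b x v) (gen m) - ((Ff m v + Gf m v) * Ff (m+1) x) • gen (m+2)
        ∈ lcs b (m+3) := by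
      have h3 : b x (b v (gen m)) - (Ff m v * Ff (m+1) x) • gen (m+2) ∈ lcs b (m+3) :=
        coeff_trans (moveL (m+2) x _ _ _ (hFf m v h1 (by omega)))
          (hFf (m+1) x (by omega) (by omega))
      have h4 : b x (b (gen m) v) - (Gf m v * Ff (m+1) x) • gen (m+2) ∈ lcs b (m+3) :=
        coeff_trans (moveL (m+2) x _ _ _ (hGf m v h1 (by omega)))
          (hFf (m+1) x (by omega) (by omega))
      have hsum := Submodule.add_mem _ h3 h4
      rw [sub_add_sub_comm] at hsum
      rw [hZ x v (gen m)]
      rwa [show ((Ff m v + Gf m v) * Ff (m+1) x) • gen (m+2)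
          = (Ff m v * Ff (m+1) x) • gen (m+2) + (Gf m v * Ff (m+1) x) • gen (m+2) from by
        rw [← add_smul, ← add_mul]]
    exact keyeq (m+2) (by omega) h2 _ _ _ hL hR
  -- Identity IV_m :  G_m(x)·G_{m+1}(v) = (β(x,v)+β(v,x))·Γ'_m
  have id4 : ∀ m : ℕ, 1 ≤ m → m + 2 ≤ k+3 → ∀ x v : Z,
      Gf m x * Gf (m+1) v = (β x v + β v x) * Γ' m := by
    intro m h1 h2 x v
    have hL : b (b (gen m) x) v - (Gf m x * Gf (m+1) v) • gen (m+2) ∈ lcs b (m+3) := by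
      have ha := moveR (m+2) _ _ _ (hGf m x h1 (by omega)) v
      exact coeff_trans ha (hGf (m+1) v (by omega) (by omega))
    have hR : b (b (gen m) x) v - ((β x v + β v x) * Γ' m) • gen (m+2) ∈ lcs b (m+3) := by
      have h3 : b (gen m) (b x v) - (β x v * Γ' m) • gen (m+2) ∈ lcs b (m+3) := by
        have ha := moveMulL m 2 (gen m) (hgm m h1 (by omega)) _ _ _ (hβ x v)
        rw [show m+2+1 = m+3 by omega] at ha
        exact coeff_trans ha (hΓ' m h1 h2)
      have h4 : b (gen m) (b v x) - (β v x * Γ' m) • gen (m+2) ∈ lcs b (m+3) := by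
        have ha := moveMulL m 2 (gen m) (hgm m h1 (by omega)) _ _ _ (hβ v x)
        rw [show m+2+1 = m+3 by omega] at ha
        exact coeff_trans ha (hΓ' m h1 h2)
      have hsum := Submodule.add_mem _ h3 h4
      rw [sub_add_sub_comm] at hsum
      rw [hZ (gen m) x v]
      rwa [show ((β x v + β v x) * Γ' m) • gen (m+2)
          = (β x v * Γ' m) • gen (m+2) + (β v x * Γ' m) • gen (m+2) from by
        rw [← add_smul, ← add_mul]]
    exact keyeq (m+2) (by omega) h2 _ _ _ hL hR
  -- Identity III_k :  F_k(x)·G_{k+1}(v) = (G_k(v)+F_k(v))·F_{k+1}(x)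
  have id3 : ∀ x v : Z, Ff k x * Gf (k+1) v = (Gf k v + Ff k v) * Ff (k+1) x := by
    intro x v
    have hL : b (b x (gen k)) v - (Ff k x * Gf (k+1) v) • gen (k+2) ∈ lcs b (k+3) := by
      have ha := moveR (k+2) _ _ _ (hFf k x hk1 (by omega)) v
      exact coeff_trans ha (hGf (k+1) v (by omega) (by omega))
    have hR : b (b x (gen k)) v - ((Gf k v + Ff k v) * Ff (k+1) x) • gen (k+2)
        ∈ lcs b (k+3) := by
      have h3 : b x (b (gen k) v) - (Gf k v * Ff (k+1) x) • gen (k+2) ∈ lcs b (k+3) :=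
        coeff_trans (moveL (k+2) x _ _ _ (hGf k v hk1 (by omega)))
          (hFf (k+1) x (by omega) (by omega))
      have h4 : b x (b v (gen k)) - (Ff k v * Ff (k+1) x) • gen (k+2) ∈ lcs b (k+3) :=
        coeff_trans (moveL (k+2) x _ _ _ (hFf k v hk1 (by omega)))
          (hFf (k+1) x (by omega) (by omega))
      have hsum := Submodule.add_mem _ h3 h4
      rw [sub_add_sub_comm] at hsum
      rw [hZ x (gen k) v]
      rwa [show ((Gf k v + Ff k v) * Ff (k+1) x) • gen (k+2)
          = (Gf k v * Ff (k+1) x) • gen (k+2) + (Ff k v * Ff (k+1) x) • gen (k+2) from by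
        rw [← add_smul, ← add_mul]]
    exact keyeq (k+2) (by omega) (by omega) _ _ _ hL hR
  -- characterization of Kmod by the scalar F
  have charK : ∀ m : ℕ, 1 ≤ m → m + 1 ≤ k+3 → ∀ x : Z, (x ∈ Kmod b m ↔ Ff m x = 0) := by
    intro m h1 h2 x
    constructor
    · intro hx
      have hmem : b x (gen m) ∈ lcs b (m+2) := hx (gen m) (hgm m h1 (by omega))
      have hmem2 : Ff m x • gen (m+1) ∈ lcs b (m+2) := by
        have := Submodule.sub_mem _ hmem (hFf m x h1 h2)
        rwa [sub_sub_cancel] at this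
      exact smul_cancel (hgn (m+1) (by omega) h2) hmem2
    · intro hz y hy
      have h0 : b x (gen m) ∈ lcs b (m+2) := by
        have := hFf m x h1 h2
        rwa [hz, zero_smul, sub_zero] at this
      obtain ⟨c, hc⟩ := hone m h1 (by omega) (gen m) (hgm m h1 (by omega))
        (hgn m h1 (by omega)) y hy
      have h5 : b x (y - c • gen m) ∈ lcs b (m+2) := mem_lcs_succ b x hc
      have he : b x y = b x (y - c • gen m) + c • b x (gen m) := by
        have h6 : b x (y - c • gen m) = b x y - c • b x (gen m) := by simp
        rw [h6]; abel
      rw [he]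
      exact Submodule.add_mem _ h5 (Submodule.smul_mem _ _ h0)
  -- non-vanishing of the F's
  have fnz : ∀ m : ℕ, 1 ≤ m → m ≤ k+2 → ∃ x : Z, Ff m x ≠ 0 := by
    intro m h1 h2
    by_contra hcon
    push_neg at hcon
    have hK : ∀ x : Z, x ∈ Kmod b m := fun x => (charK m h1 (by omega) x).2 (hcon x)
    have hle : lcs b (m+1) ≤ lcs b (m+2) := by
      rw [lcs_succ b m]
      refine Submodule.span_le.2 ?_
      rintro w ⟨x, y, hy, rfl⟩
      exact hK x y hy
    obtain ⟨y, hy1, hy1'⟩ := hprop (m+1) (by omega) (by omega)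
    exact hy1' (hle hy1)
  -- linearity of the F's
  have Flin_add : ∀ m : ℕ, 1 ≤ m → m + 1 ≤ k+3 → ∀ u v : Z,
      Ff m (u + v) = Ff m u + Ff m v := by
    intro m h1 h2 u v
    refine keyeq (m+1) (by omega) h2 (b (u+v) (gen m)) _ _ (hFf m (u+v) h1 h2) ?_
    have hsum := Submodule.add_mem _ (hFf m u h1 h2) (hFf m v h1 h2)
    rw [sub_add_sub_comm] at hsum
    have he : b (u+v) (gen m) = b u (gen m) + b v (gen m) := by simp
    rw [he, add_smul]
    exact hsum
  have Flin_smul : ∀ m : ℕ, 1 ≤ m → m + 1 ≤ k+3 → ∀ (c : F) (v : Z),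
      Ff m (c • v) = c * Ff m v := by
    intro m h1 h2 c v
    refine keyeq (m+1) (by omega) h2 (b (c • v) (gen m)) _ _ (hFf m (c • v) h1 h2) ?_
    have hsm := Submodule.smul_mem _ c (hFf m v h1 h2)
    have he : c • (b v (gen m) - Ff m v • gen (m+1))
        = b (c • v) (gen m) - (c * Ff m v) • gen (m+1) := by
      rw [smul_sub, smul_smul]
      congr 1
      simp
    rwa [he] at hsm
  -- the mismatch point
  have hmis : ∃ x₀ : Z, ¬ (Ff k x₀ = 0 ↔ Ff (k+1) x₀ = 0) := by
    by_contra hcon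
    push_neg at hcon
    refine hne (Submodule.ext fun x => ?_)
    rw [charK k hk1 (by omega) x, charK (k+1) (by omega) (by omega) x]
    exact hcon x
  obtain ⟨x₀, hx₀⟩ := hmis
  -- Step 2 : G_{k+1} ≡ 0 and G_k = −F_k
  have hG' : ∀ v : Z, Gf (k+1) v = 0 := by
    intro v
    by_contra hv0
    rcases eq_or_ne (Gf k v + Ff k v) 0 with hc0 | hc0
    · obtain ⟨xa, hxa⟩ := fnz k hk1 (by omega)
      have h := id3 xa v
      rw [hc0, zero_mul] at h
      exact hv0 ((mul_eq_zero.1 h).resolve_left hxa)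
    · refine hx₀ ⟨fun h0 => ?_, fun h0 => ?_⟩
      · have h := id3 x₀ v
        rw [h0, zero_mul] at h
        exact (mul_eq_zero.1 h.symm).resolve_left hc0
      · have h := id3 x₀ v
        rw [h0, mul_zero] at h
        exact (mul_eq_zero.1 h).resolve_right hv0
  obtain ⟨x₁, hx₁⟩ := fnz (k+1) (by omega) (by omega)
  have hχ : ∀ v : Z, Gf k v = - Ff k v := by
    intro v
    have h := id3 x₁ v
    rw [hG' v, mul_zero] at h
    have h0 := (mul_eq_zero.1 h.symm).resolve_right hx₁
    linear_combination h0
  obtain ⟨x₂, hx₂⟩ := fnz (k+2) (by omega) (by omega)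
  -- Step 3 : β is rank one
  have id2k1 : ∀ x v : Z, β x v * Γ (k+1) = Ff (k+1) v * Ff (k+2) x := by
    intro x v
    have h := id2 (k+1) (by omega) (by omega) x v
    rwa [hG' v, add_zero] at h
  have hΓne : Γ (k+1) ≠ 0 := by
    intro h0
    have h := id2k1 x₂ x₁
    rw [h0, mul_zero] at h
    rcases mul_eq_zero.1 h.symm with h' | h'
    exacts [hx₁ h', hx₂ h']
  by_cases hcaseA : ∃ y₀ : Z, Ff (k+1) y₀ = 0 ∧ Ff (k+2) y₀ ≠ 0
  · -- Case (a) : kernels at k+1, k+2 differ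
    obtain ⟨y₀, hy₀1, hy₀2⟩ := hcaseA
    have hβx : ∀ x : Z, β x y₀ = 0 := by
      intro x
      have h := id2k1 x y₀
      rw [hy₀1, zero_mul] at h
      exact (mul_eq_zero.1 h).resolve_right hΓne
    obtain ⟨xa, hxa⟩ := fnz 1 (by omega) (by omega)
    have hβy : ∀ v : Z, β y₀ v = 0 := by
      intro v
      have h5 := id1 xa y₀ v
      rw [hβx xa, zero_mul, hβx v, add_zero] at h5
      exact (mul_eq_zero.1 h5.symm).resolve_right hxa
    have h := id2k1 y₀ x₁
    rw [hβy x₁, zero_mul] at h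
    rcases mul_eq_zero.1 h.symm with h' | h'
    exacts [hx₁ h', hy₀2 h']
  · -- Case (b) : ker F_{k+1} ⊆ ker F_{k+2}
    push_neg at hcaseA
    obtain ⟨c, hc⟩ := func_prop (Flin_add (k+1) (by omega) (by omega))
      (Flin_smul (k+1) (by omega) (by omega)) (Flin_add (k+2) (by omega) (by omega))
      (Flin_smul (k+2) (by omega) (by omega)) ⟨x₁, hx₁⟩ hcaseA
    have hβA : ∀ x v : Z, β x v * Γ (k+1) = c * (Ff (k+1) x * Ff (k+1) v) := by
      intro x v
      rw [id2k1 x v, hc x]; ring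
    rcases eq_or_lt_of_le hk1 with hkeq | hkgt
    · -- k = 1
      have id1' := id1
      rw [hkeq] at id1'
      have hcne : c ≠ 0 := by
        intro h0
        exact hx₂ (by rw [hc x₂, h0, zero_mul])
      have hI : ∀ x v : Z, - (Ff (k+1) x * Ff k v) = 2 * Ff (k+1) v * Ff k x := by
        intro x v
        have hstep : c * (Ff (k+1) x * Ff (k+1) x₁) * (- Ff k v)
            = 2 * (c * (Ff (k+1) x₁ * Ff (k+1) v)) * Ff k x := by
          have h := congrArg (fun t => t * Γ (k+1)) (id1' x x₁ v)
          calc c * (Ff (k+1) x * Ff (k+1) x₁) * (- Ff k v)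
              = (β x x₁ * Γ (k+1)) * Gf k v := by rw [hβA x x₁, hχ v]
            _ = β x x₁ * Gf k v * Γ (k+1) := by ring
            _ = (β x₁ v + β v x₁) * Ff k x * Γ (k+1) := h
            _ = (β x₁ v * Γ (k+1) + β v x₁ * Γ (k+1)) * Ff k x := by ring
            _ = (c * (Ff (k+1) x₁ * Ff (k+1) v) + c * (Ff (k+1) v * Ff (k+1) x₁))
                  * Ff k x := by rw [hβA x₁ v, hβA v x₁]
            _ = 2 * (c * (Ff (k+1) x₁ * Ff (k+1) v)) * Ff k x := by ring
        have hne2 : c * Ff (k+1) x₁ ≠ 0 := mul_ne_zero hcne hx₁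
        apply mul_left_cancel₀ hne2
        linear_combination hstep
      by_cases hA : Ff k x₀ = 0
      · have hB : Ff (k+1) x₀ ≠ 0 := fun h => hx₀ ⟨fun _ => h, fun _ => hA⟩
        obtain ⟨xa, hxa⟩ := fnz k hk1 (by omega)
        have h := hI x₀ xa
        rw [hA, mul_zero] at h
        rcases mul_eq_zero.1 (neg_eq_zero.1 h) with h' | h'
        exacts [hB h', hxa h']
      · have hB : Ff (k+1) x₀ = 0 := by
          by_contra h
          exact hx₀ ⟨fun h1 => (hA h1).elim, fun h2 => (h h2).elim⟩
        have h := hI x₁ x₀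
        rw [hB, mul_zero, zero_mul] at h
        rcases mul_eq_zero.1 (neg_eq_zero.1 h) with h' | h'
        exacts [hx₁ h', hA h']
    · -- k ≥ 2
      obtain ⟨km, rfl⟩ : ∃ km, k = km + 1 := ⟨k - 1, by omega⟩
      have hkm1 : 1 ≤ km := by omega
      have hy10 : ∃ y₁₀ : Z, Ff (km+1) y₁₀ ≠ 0 ∧ Ff (km+1+1) y₁₀ = 0 := by
        by_cases h1 : Ff (km+1) x₀ = 0
        · have h2 : Ff (km+1+1) x₀ ≠ 0 := fun h2 => hx₀ ⟨fun _ => h2, fun _ => h1⟩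
          exact func_flip (Flin_add (km+1) (by omega) (by omega))
            (Flin_smul (km+1) (by omega) (by omega))
            (Flin_add (km+1+1) (by omega) (by omega))
            (Flin_smul (km+1+1) (by omega) (by omega))
            (fnz (km+1) (by omega) (by omega)) h1 h2
        · by_cases h2 : Ff (km+1+1) x₀ = 0
          · exact ⟨x₀, h1, h2⟩
          · exact absurd ⟨fun ha => (h1 ha).elim, fun hb => (h2 hb).elim⟩ hx₀
      obtain ⟨y₁₀, hy10a, hy10b⟩ := hy10
      have hβ10 : ∀ v : Z, β y₁₀ v = 0 ∧ β v y₁₀ = 0 := by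
        intro v
        constructor
        · have h := hβA y₁₀ v
          rw [hy10b] at h
          rw [show c * ((0:F) * Ff (km+1+1) v) = 0 by ring] at h
          exact (mul_eq_zero.1 h).resolve_right hΓne
        · have h := hβA v y₁₀
          rw [hy10b] at h
          rw [show c * (Ff (km+1+1) v * (0:F)) = 0 by ring] at h
          exact (mul_eq_zero.1 h).resolve_right hΓne
      -- G_{km} ≡ 0
      have hGkm : ∀ x : Z, Gf km x = 0 := by
        intro x
        have h4 := id4 km hkm1 (by omega) x y₁₀
        rw [(hβ10 x).2, (hβ10 x).1, add_zero, zero_mul] at h4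
        have hne3 : Gf (km+1) y₁₀ ≠ 0 := by
          rw [hχ y₁₀]
          simpa using hy10a
        exact (mul_eq_zero.1 h4).resolve_right hne3
      obtain ⟨xkm, hxkm⟩ := fnz km hkm1 (by omega)
      have hfinal := id2 km hkm1 (by omega) y₁₀ xkm
      rw [(hβ10 xkm).1, zero_mul, hGkm xkm, add_zero] at hfinal
      rcases mul_eq_zero.1 hfinal.symm with h' | h'
      exacts [hxkm h', hy10a h']


end ZinbielCore

namespace ZinbielMain
open ZinbielAux ZinbielAux2 ZinbielCore

variable {F : Type*} [Field F] {Z : Type*} [AddCommGroup Z] [Module F Z]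
variable [FiniteDimensional F Z]

/-- one-dimensional quotient lemma -/
lemma one_dim {M M' : Submodule F Z} (hle : M' ≤ M)
    (hrk : Module.finrank F M ≤ Module.finrank F M' + 1)
    {y : Z} (hy : y ∈ M) (hy' : y ∉ M') :
    ∀ y' ∈ M, ∃ c : F, y' - c • y ∈ M' := by
  have hW : M' ⊔ Submodule.span F {y} = M := by
    have hWle : M' ⊔ Submodule.span F {y} ≤ M := by
      refine sup_le hle ?_
      simpa [Submodule.span_le] using hy
    have hlt : M' < M' ⊔ Submodule.span F {y} := by
      refine lt_of_le_of_ne le_sup_left fun hEq => hy' ?_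
      rw [hEq]
      exact Submodule.mem_sup_right (Submodule.mem_span_singleton_self y)
    have h1 : Module.finrank F M' < Module.finrank F ↥(M' ⊔ Submodule.span F {y}) :=
      Submodule.finrank_lt_finrank_of_lt hlt
    exact Submodule.eq_of_le_of_finrank_le hWle (by omega)
  intro y' hy'mem
  rw [← hW] at hy'mem
  obtain ⟨u, hu, v, hv, huv⟩ := Submodule.mem_sup.1 hy'mem
  obtain ⟨c, rfl⟩ := Submodule.mem_span_singleton.1 hv
  exact ⟨c, by rw [← huv]; simpa using hu⟩

end ZinbielMain

open ZinbielAux ZinbielAux2 ZinbielCore ZinbielMain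

/-- if `Z` is an `n`-dimensional `p`-filiform Zinbiel algebra (nilpotent with
`dim Z^i = n - p - i + 1` for `2 ≤ i ≤ n - p + 1`), then there is a basis `e₁, ..., e_n`
of `Z` with `[e₁, e_i] = e_{i+1}` for all `p + 1 ≤ i ≤ n - p - 1`.
(Here `Z^i = lcs b (i-1)`, and the dimension condition is written additively to avoid
truncated subtraction.) -/
theorem stmt11 {F : Type*} [Field F] {Z : Type*} [AddCommGroup Z] [Module F Z]
    [FiniteDimensional F Z] (b : Z →ₗ[F] Z →ₗ[F] Z)
    (hZinbiel : ∀ x y z : Z, b (b x y) z = b x (b y z) + b x (b z y))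
    (p : ℕ) (hnilp : ∃ m : ℕ, lcs b m = ⊥)
    (hfil : ∀ i : ℕ, 2 ≤ i → i ≤ Module.finrank F Z - p + 1 →
      Module.finrank F (lcs b (i - 1)) + p + i = Module.finrank F Z + 1) :
    ∃ e : Module.Basis (Fin (Module.finrank F Z)) F Z,
      ∀ (i : ℕ) (h1 : p + 1 ≤ i) (h2 : i + p + 1 ≤ Module.finrank F Z),
        b (e ⟨0, by omega⟩) (e ⟨i - 1, by omega⟩) = e ⟨i, by omega⟩ := by
  by_cases hdeg : Module.finrank F Z < 2*p + 2
  · exact ⟨Module.finBasis F Z, fun i h1 h2 => absurd h2 (by omega)⟩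
  push_neg at hdeg
  set n := Module.finrank F Z with hn
  set N := n - p with hN
  have hNp : p + N = n := by omega
  have hNge : p + 2 ≤ N := by omega
  -- dimension facts
  have hdim : ∀ k : ℕ, 1 ≤ k → k ≤ N → Module.finrank F (lcs b k) + (p + k) = n := by
    intro k h1 h2
    have h := hfil (k+1) (by omega) (by omega)
    have h' : Module.finrank F ↥(lcs b k) + p + (k+1) = n + 1 := h
    omega
  have hprop : ∀ m : ℕ, 1 ≤ m → m + 1 ≤ N → ∃ y, y ∈ lcs b m ∧ y ∉ lcs b (m+1) := by
    intro m h1 h2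
    by_contra hcon
    push_neg at hcon
    have hle : lcs b m ≤ lcs b (m+1) := fun y hy => hcon y hy
    have heq : lcs b m = lcs b (m+1) := le_antisymm hle (lcs_succ_le b m)
    have hd1 := hdim m h1 (by omega)
    have hd2 := hdim (m+1) (by omega) h2
    rw [heq] at hd1
    omega
  have honeL : ∀ m : ℕ, 1 ≤ m → m + 1 ≤ N → ∀ y, y ∈ lcs b m → y ∉ lcs b (m+1) →
      ∀ y' ∈ lcs b m, ∃ c : F, y' - c • y ∈ lcs b (m+1) := by
    intro m h1 h2 y hy hy'
    refine one_dim (lcs_succ_le b m) ?_ hy hy'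
    have hd1 := hdim m h1 (by omega)
    have hd2 := hdim (m+1) (by omega) h2
    omega
  -- C_1 is contained in every kernel
  have KC1 : ∀ m : ℕ, lcs b 1 ≤ Kmod b m := by
    intro m c hc y hy
    have := lcs_mul b hZinbiel (1+m) 1 m le_rfl c hc y hy
    rwa [show 1+m+1 = m+2 by omega] at this
  -- kernels are proper
  have Kne : ∀ m : ℕ, 1 ≤ m → m + 2 ≤ N → Kmod b m ≠ ⊤ := by
    intro m h1 h2 htop
    have hle : lcs b (m+1) ≤ lcs b (m+2) := by
      rw [lcs_succ b m]
      refine Submodule.span_le.2 ?_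
      rintro w ⟨x, y, hy, rfl⟩
      have hx : x ∈ Kmod b m := htop ▸ Submodule.mem_top
      exact hx y hy
    obtain ⟨y, hy1, hy2⟩ := hprop (m+1) (by omega) (by omega)
    exact hy2 (hle hy1)
  -- kernels agree in the stable range
  have Keq : ∀ j : ℕ, 1 ≤ j → j + 3 ≤ N → Kmod b j = Kmod b 1 := by
    intro j
    induction j with
    | zero => intro h; omega
    | succ j ih =>
      intro h1 h2
      rcases Nat.eq_zero_or_pos j with rfl | hj
      · rfl
      · have hstep : Kmod b j = Kmod b (j+1) :=
          core b hZinbiel j hj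
            (fun m hm1 hm2 => hprop m hm1 (by omega))
            (fun m hm1 hm2 => honeL m hm1 (by omega))
        rw [← hstep]
        exact ih hj (by omega)
  -- the p = 0 quadratic step
  have hp0 : p = 0 → ∀ x : Z, x ∉ lcs b 1 → b x x ∉ lcs b 2 := by
    intro hp x hx hbxx
    have hx0 : x ≠ 0 := fun h => hx (h ▸ (lcs b 1).zero_mem)
    have hsup : Submodule.span F {x} ⊔ lcs b 1 = ⊤ := by
      have hd1 := hdim 1 le_rfl (by omega)
      have hinf : Submodule.span F {x} ⊓ lcs b 1 = ⊥ := by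
        refine (Submodule.eq_bot_iff _).2 fun w ⟨hw1, hw2⟩ => ?_
        obtain ⟨c, rfl⟩ := Submodule.mem_span_singleton.1 hw1
        rw [smul_cancel hx hw2, zero_smul]
      have hco := Submodule.finrank_sup_add_finrank_inf_eq (Submodule.span F {x}) (lcs b 1)
      rw [hinf] at hco
      simp only [finrank_bot, add_zero, finrank_span_singleton hx0] at hco
      refine Submodule.eq_of_le_of_finrank_le le_top ?_
      rw [finrank_top]
      omega
    have hZtop : ∀ u : Z, ∃ (a : F) (cz : Z), cz ∈ lcs b 1 ∧ u = a • x + cz := by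
      intro u
      have hu : u ∈ Submodule.span F {x} ⊔ lcs b 1 := hsup ▸ Submodule.mem_top
      obtain ⟨v, hv, w, hw, hvw⟩ := Submodule.mem_sup.1 hu
      obtain ⟨a, rfl⟩ := Submodule.mem_span_singleton.1 hv
      exact ⟨a, w, hw, hvw.symm⟩
    have hle : lcs b 1 ≤ lcs b 2 := by
      rw [lcs_succ b 0]
      refine Submodule.span_le.2 ?_
      rintro w ⟨u, v, hv, rfl⟩
      obtain ⟨a, cu, hcu, rfl⟩ := hZtop u
      obtain ⟨a', cv, hcv, rfl⟩ := hZtop v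
      have hexp : b (a • x + cu) (a' • x + cv)
          = (a*a') • b x x + a • b x cv + a' • b cu x + b cu cv := by
        simp [map_add, map_smul, smul_add, smul_smul]
        rw [mul_comm a' a]
        abel
      rw [hexp]
      have m1 : (a*a') • b x x ∈ lcs b 2 := Submodule.smul_mem _ _ hbxx
      have m2 : a • b x cv ∈ lcs b 2 := by
        refine Submodule.smul_mem _ _ ?_
        have := lcs_mul b hZinbiel 1 0 1 (by omega) x Submodule.mem_top cv hcv
        simpa using this
      have m3 : a' • b cu x ∈ lcs b 2 := by
        refine Submodule.smul_mem _ _ ?_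
        have := lcs_mul b hZinbiel 1 1 0 (by omega) cu hcu x Submodule.mem_top
        simpa using this
      have m4 : b cu cv ∈ lcs b 2 := by
        have := lcs_mul b hZinbiel 2 1 1 (by omega) cu hcu cv hcv
        exact lcs_le_lcs b (by omega) this
      exact Submodule.add_mem _ (Submodule.add_mem _ (Submodule.add_mem _ m1 m2) m3) m4
    obtain ⟨y, hy1, hy2⟩ := hprop 1 le_rfl (by omega)
    exact hy2 (hle hy1)
  -- choose the good element x
  have hxgood : ∃ x : Z, x ∉ lcs b 1 ∧ ∀ m, max p 1 ≤ m → m + 2 ≤ N → x ∉ Kmod b m := by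
    by_cases hN3 : 3 ≤ N
    · have hm₀1 : 1 ≤ max p 1 := le_max_right p 1
      have hm₀2 : max p 1 + 2 ≤ N := by
        rcases max_cases p 1 with ⟨h, _⟩ | ⟨h, _⟩ <;> omega
      obtain ⟨x, hx1, hx2⟩ := avoid_two (Kmod b (max p 1)) (Kmod b (N-2))
        (Kne _ hm₀1 hm₀2) (Kne (N-2) (by omega) (by omega))
      refine ⟨x, fun hc => hx2 (KC1 (N-2) hc), fun m hm hm2 => ?_⟩
      by_cases hm3 : m + 3 ≤ N
      · rw [Keq m (by omega) hm3, ← Keq (max p 1) hm₀1 (by omega)]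
        exact hx1
      · have : m = N - 2 := by omega
        rw [this]
        exact hx2
    · have hN2 : N = 2 := by omega
      have hp' : p = 0 := by omega
      have h1top : lcs b 1 ≠ ⊤ := by
        intro htop
        have hd1 := hdim 1 le_rfl (by omega)
        rw [htop, finrank_top] at hd1
        omega
      obtain ⟨x, hx⟩ : ∃ x : Z, x ∉ lcs b 1 := by
        by_contra hcon
        push_neg at hcon
        exact h1top (Submodule.eq_top_iff'.2 hcon)
      exact ⟨x, hx, fun m hm hm2 => by omega⟩
  obtain ⟨x, hxC1, hgood⟩ := hxgood
  -- good transfer step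
  have good_step : ∀ m, max p 1 ≤ m → m + 2 ≤ N → ∀ y, y ∈ lcs b m → y ∉ lcs b (m+1) →
      b x y ∉ lcs b (m+2) := by
    intro m hm hm2 y hy hy' hmem
    refine hgood m hm hm2 (fun y' hy'' => ?_)
    obtain ⟨c, hc⟩ := honeL m (by omega) (by omega) y hy hy' y' hy''
    have h5 : b x (y' - c • y) ∈ lcs b (m+2) := mem_lcs_succ b x hc
    have he : b x y' = b x (y' - c • y) + c • (b x y) := by
      have h6 : b x (y' - c • y) = b x y' - c • b x y := by simp
      rw [h6]; abel
    rw [he]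
    exact Submodule.add_mem _ h5 (Submodule.smul_mem _ _ hmem)
  -- chain start
  have hz0 : ∃ z₀ : Z, z₀ ∈ lcs b p ∧ z₀ ∉ lcs b (p+1) ∧ (p = 0 → z₀ = x) := by
    rcases Nat.eq_zero_or_pos p with rfl | hp
    · exact ⟨x, Submodule.mem_top, hxC1, fun _ => rfl⟩
    · obtain ⟨y, hy1, hy2⟩ := hprop p hp (by omega)
      exact ⟨y, hy1, hy2, fun h => by omega⟩
  obtain ⟨z₀, hz₀1, hz₀2, hz₀3⟩ := hz0
  -- the chain
  set z : ℕ → Z := fun j => (⇑(b x))^[j] z₀ with hzdef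
  have hzsucc : ∀ j, z (j+1) = b x (z j) := by
    intro j
    simp only [hzdef, Function.iterate_succ_apply']
  have hchain : ∀ j, p + j + 1 ≤ N → z j ∈ lcs b (p+j) ∧ z j ∉ lcs b (p+j+1) := by
    intro j
    induction j with
    | zero => intro _; exact ⟨by simpa [hzdef] using hz₀1, by simpa [hzdef] using hz₀2⟩
    | succ j ih =>
      intro hj
      obtain ⟨ih1, ih2⟩ := ih (by omega)
      have hmem : z (j+1) ∈ lcs b (p+(j+1)) := by
        rw [hzsucc j, show p+(j+1) = (p+j)+1 by omega]
        exact mem_lcs_succ b x ih1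
      refine ⟨hmem, ?_⟩
      rw [hzsucc j, show p+(j+1)+1 = (p+j)+2 by omega]
      by_cases hcase : max p 1 ≤ p + j
      · exact good_step (p+j) hcase (by omega) (z j) ih1 ih2
      · -- only possible when p = 0 and j = 0
        have hp' : p = 0 := by
          rcases max_cases p 1 with ⟨h, _⟩ | ⟨h, _⟩ <;> omega
        have hj0 : j = 0 := by omega
        subst hj0
        have hz0x : z 0 = x := by simp [hzdef, hz₀3 hp']
        rw [hz0x, hp']
        simpa using hp0 hp' x hxC1
  -- assemble the basis
  rcases Nat.eq_zero_or_pos p with hp | hp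
  · -- p = 0 : the chain is the whole basis
    subst hp
    simp only [Nat.zero_add] at hchain
    have hNn : N = n := by omega
    have hfam : LinearIndependent F (fun j : Fin n => z j.val) := by
      refine flag_indep b n _ (fun j => j.val) (fun i j hij => hij) ?_ ?_
      · intro j
        have hj := j.isLt
        exact (hchain j.val (by omega)).1
      · intro j
        have hj := j.isLt
        exact (hchain j.val (by omega)).2
    haveI : Nonempty (Fin n) := ⟨⟨0, by omega⟩⟩
    have hcard : Fintype.card (Fin n) = Module.finrank F Z := by
      simpa using hn.symm
    refine ⟨basisOfLinearIndependentOfCardEqFinrank hfam hcard, fun i h1 h2 => ?_⟩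
    have hcoe := coe_basisOfLinearIndependentOfCardEqFinrank hfam hcard
    simp only [hcoe]
    show b (z 0) (z (i-1)) = z i
    have hz0x : z 0 = x := hz₀3 rfl
    rw [hz0x, ← hzsucc (i-1)]
    exact congrArg z (by omega)
  · -- p ≥ 1
    set t := N - p with htdef
    have ht : p + t = N := by omega
    have ht2 : 2 ≤ t := by omega
    set famC : Fin (t+1) → Z := fun j => if (j : ℕ) = 0 then x else z (j.val - 1)
      with hfamC
    have liC : LinearIndependent F famC := by
      refine flag_indep b (t+1) famC
        (fun j => if (j : ℕ) = 0 then 0 else p + (j.val - 1)) ?_ ?_ ?_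
      · intro i j hij
        have hij' : (i : ℕ) < (j : ℕ) := hij
        show (if (i : ℕ) = 0 then 0 else p + ((i : ℕ) - 1))
            < (if (j : ℕ) = 0 then 0 else p + ((j : ℕ) - 1))
        by_cases hi : (i : ℕ) = 0
        · rw [if_pos hi, if_neg (by omega)]
          omega
        · rw [if_neg hi, if_neg (by omega)]
          omega
      · intro j
        show famC j ∈ lcs b (if (j : ℕ) = 0 then 0 else p + ((j : ℕ) - 1))
        simp only [hfamC]
        by_cases hj : (j : ℕ) = 0
        · rw [if_pos hj, if_pos hj]
          exact Submodule.mem_top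
        · rw [if_neg hj, if_neg hj]
          have hjl := j.isLt
          exact (hchain ((j : ℕ) - 1) (by omega)).1
      · intro j
        show famC j ∉ lcs b ((if (j : ℕ) = 0 then 0 else p + ((j : ℕ) - 1)) + 1)
        simp only [hfamC]
        by_cases hj : (j : ℕ) = 0
        · rw [if_pos hj, if_pos hj]
          exact hxC1
        · rw [if_neg hj, if_neg hj]
          have hjl := j.isLt
          exact (hchain ((j : ℕ) - 1) (by omega)).2
    set W : Submodule F Z := Submodule.span F (Set.range famC) with hW
    obtain ⟨W', hWc⟩ := Submodule.exists_isCompl W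
    set mf := Module.finrank F ↥W' with hmf
    set famF : Fin mf → Z := fun r => ((Module.finBasis F ↥W') r : Z) with hfamF
    have liF : LinearIndependent F famF := by
      have := (Module.finBasis F ↥W').linearIndependent.map' W'.subtype
        (Submodule.ker_subtype W')
      exact this
    have hrangeF : Submodule.span F (Set.range famF) ≤ W' := by
      refine Submodule.span_le.2 ?_
      rintro _ ⟨r, rfl⟩
      exact SetLike.coe_mem _
    have liSum : LinearIndependent F (Sum.elim famC famF) := by
      refine linearIndependent_sum.2 ⟨?_, ?_, ?_⟩
      · rwa [Sum.elim_comp_inl]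
      · rwa [Sum.elim_comp_inr]
      · rw [Sum.elim_comp_inl, Sum.elim_comp_inr]
        exact (hWc.disjoint).mono_right hrangeF
    have hWrk : Module.finrank F ↥W = t + 1 := by
      have := finrank_span_eq_card liC
      simpa using this
    have hWrk' : (t + 1) + mf = n := by
      have hco := Submodule.finrank_sup_add_finrank_inf_eq W W'
      rw [hWc.sup_eq_top, hWc.inf_eq_bot, finrank_top, finrank_bot, hWrk] at hco
      omega
    have hmf1 : 1 ≤ mf := by omega
    have hlt_t : ∀ v : ℕ, min v t < t + 1 := fun v => Nat.lt_succ_of_le (min_le_right v t)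
    have hlt_mf : ∀ v : ℕ, min v (mf - 1) < mf :=
      fun v => lt_of_le_of_lt (min_le_right _ _) (by omega)
    set σ : Fin n → (Fin (t+1)) ⊕ (Fin mf) := fun i =>
      if (i : ℕ) = 0 then Sum.inl ⟨0, Nat.succ_pos t⟩
      else if p ≤ (i : ℕ) ∧ (i : ℕ) + p + 1 ≤ n then
        Sum.inl ⟨min ((i : ℕ) - p + 1) t, hlt_t _⟩
      else if (i : ℕ) < p then Sum.inr ⟨min ((i : ℕ) - 1) (mf - 1), hlt_mf _⟩
      else Sum.inr ⟨min ((i : ℕ) - (n - p) + (p - 1)) (mf - 1), hlt_mf _⟩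
      with hσ
    have σinj : Function.Injective σ := by
      intro i i' hh
      have hil := i.isLt
      have hil' := i'.isLt
      simp only [hσ] at hh
      split_ifs at hh <;>
        first
        | (simp only [Sum.inl.injEq, Fin.mk.injEq] at hh; exact Fin.ext (by omega))
        | (simp only [Sum.inr.injEq, Fin.mk.injEq] at hh; exact Fin.ext (by omega))
        | simp at hh
    have liE : LinearIndependent F (Sum.elim famC famF ∘ σ) := liSum.comp σ σinj
    haveI : Nonempty (Fin n) := ⟨⟨0, by omega⟩⟩
    have hcard : Fintype.card (Fin n) = Module.finrank F Z := by
      simpa using hn.symm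
    refine ⟨basisOfLinearIndependentOfCardEqFinrank liE hcard, fun i h1 h2 => ?_⟩
    have hcoe := coe_basisOfLinearIndependentOfCardEqFinrank liE hcard
    simp only [hcoe, Function.comp_apply]
    have hσ0 : σ ⟨0, by omega⟩ = Sum.inl ⟨0, Nat.succ_pos t⟩ := by
      simp only [hσ]
      rw [if_pos trivial]
    have hσ1 : σ ⟨i - 1, by omega⟩ = Sum.inl ⟨(i - 1) - p + 1, by omega⟩ := by
      simp only [hσ]
      rw [if_neg (show ¬ ((⟨i - 1, by omega⟩ : Fin n) : ℕ) = 0 from by simp; omega),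
        if_pos (show p ≤ ((⟨i - 1, by omega⟩ : Fin n) : ℕ)
            ∧ ((⟨i - 1, by omega⟩ : Fin n) : ℕ) + p + 1 ≤ n from by
          constructor <;> simp <;> omega)]
      exact congrArg Sum.inl (Fin.ext (by simp; omega))
    have hσ2 : σ ⟨i, by omega⟩ = Sum.inl ⟨i - p + 1, by omega⟩ := by
      simp only [hσ]
      rw [if_neg (show ¬ ((⟨i, by omega⟩ : Fin n) : ℕ) = 0 from by simp; omega),
        if_pos (show p ≤ ((⟨i, by omega⟩ : Fin n) : ℕ)
            ∧ ((⟨i, by omega⟩ : Fin n) : ℕ) + p + 1 ≤ n from by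
          constructor <;> simp <;> omega)]
      exact congrArg Sum.inl (Fin.ext (by simp; omega))
    rw [hσ0, hσ1, hσ2]
    simp only [Sum.elim_inl, hfamC]
    rw [if_pos trivial, if_neg (show ¬ (i - 1 - p + 1 = 0) from by omega),
      if_neg (show ¬ (i - p + 1 = 0) from by omega)]
    show b x (z ((i - 1) - p + 1 - 1)) = z (i - p + 1 - 1)
    rw [show (i - 1) - p + 1 - 1 = i - 1 - p from by omega, ← hzsucc (i - 1 - p)]
    exact congrArg z (by omega)
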